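/- arXiv:1403.1068 — 5 statements merged into one kernel-verified Lean document; each statement's English description precedes it below -/
import Mathlib

section
/- Let α ∈ ℝ, β < 1/2, and define for t ≥ s and (p₀, q₀) with p₀² ≤ q₀, q₀ ≥ 0: Q(t) = e^{(2α+1)(t−s)}·(q₀ + (2β/(1−2β))·(1 − e^{(2β−1)(t−s)})·p₀²). Then: (i) Q(t) ≤ e^{(2α+1)(t−s)}·(1 + 2|β|/(1−2β))·q₀; (ii) if β ≥ 0 then Q(t) ≥ e^{(2α+1)(t−s)}·q₀, and if β < 0 then Q(t) ≥ (1/(1−2β))·e^{(2α+1)(t−s)}·q₀. -/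
/-! With `c = 2β/(1-2β)` and `x = (1 - e^{(2β-1)(t-s)}) p₀²`, the bracket in `Q t` is `q₀ + c x`,
and `0 ≤ x ≤ q₀` because the exponent is nonpositive. Bounding `c x` between `0` and `|c| q₀`
(for `c ≥ 0`) or between `c q₀` and `0` (for `c < 0`) gives the three estimates, using
`1 + |c| = 1 + 2|β|/(1-2β)` and `1 + c = 1/(1-2β)`. -/

open Real

lemma one_sub_exp_mul_nonneg {a τ : ℝ} (ha : a ≤ 0) (hτ : 0 ≤ τ) : 0 ≤ 1 - exp (a * τ) :=
  sub_nonneg.mpr (exp_le_one_iff.mpr (mul_nonpos_of_nonpos_of_nonneg ha hτ))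

lemma one_sub_exp_le_one (y : ℝ) : 1 - exp y ≤ 1 :=
  sub_le_self _ (exp_pos y).le

lemma add_mul_le_one_add_abs_mul {q x : ℝ} (c : ℝ) (hx : 0 ≤ x) (hxq : x ≤ q) :
    q + c * x ≤ (1 + |c|) * q := by
  have : c * x ≤ |c| * q :=
    calc c * x ≤ |c| * x := mul_le_mul_of_nonneg_right (le_abs_self c) hx
      _ ≤ |c| * q := mul_le_mul_of_nonneg_left hxq (abs_nonneg c)
  linarith

lemma one_add_mul_le_add_mul {q x c : ℝ} (hc : c ≤ 0) (hxq : x ≤ q) :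
    (1 + c) * q ≤ q + c * x := by
  nlinarith [mul_le_mul_of_nonpos_left hxq hc]

lemma one_add_div_one_sub {a : ℝ} (ha : a ≠ 1) : 1 + a / (1 - a) = 1 / (1 - a) := by
  have : 1 - a ≠ 0 := sub_ne_zero.mpr ha.symm
  field_simp
  ring

lemma abs_two_mul_div_one_sub_two_mul {β : ℝ} (hβ : β < 1 / 2) :
    |2 * β / (1 - 2 * β)| = 2 * |β| / (1 - 2 * β) := by
  rw [abs_div, abs_mul, abs_two, abs_of_pos (by linarith : (0 : ℝ) < 1 - 2 * β)]

theorem dichotomy_bounds_beta_lt_half_general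
    (α β s p₀ q₀ : ℝ) (hβ : β < 1 / 2) (hpq : p₀ ^ 2 ≤ q₀)
    (Q : ℝ → ℝ)
    (hQ : ∀ t, s ≤ t → Q t = Real.exp ((2 * α + 1) * (t - s)) *
      (q₀ + (2 * β / (1 - 2 * β)) * (1 - Real.exp ((2 * β - 1) * (t - s))) * p₀ ^ 2)) :
    (∀ t, s ≤ t →
      Q t ≤ Real.exp ((2 * α + 1) * (t - s)) * (1 + 2 * |β| / (1 - 2 * β)) * q₀) ∧
    (0 ≤ β → ∀ t, s ≤ t → Q t ≥ Real.exp ((2 * α + 1) * (t - s)) * q₀) ∧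
    (β < 0 → ∀ t, s ≤ t →
      Q t ≥ (1 / (1 - 2 * β)) * Real.exp ((2 * α + 1) * (t - s)) * q₀) := by
  set c := 2 * β / (1 - 2 * β)
  have hQ' : ∀ t, s ≤ t → Q t = exp ((2 * α + 1) * (t - s)) *
      (q₀ + c * ((1 - exp ((2 * β - 1) * (t - s))) * p₀ ^ 2)) := fun t ht => by
    rw [hQ t ht, mul_assoc c]
  have hx : ∀ t, s ≤ t → 0 ≤ (1 - exp ((2 * β - 1) * (t - s))) * p₀ ^ 2 := fun t ht =>
    mul_nonneg (one_sub_exp_mul_nonneg (by linarith) (sub_nonneg.mpr ht)) (sq_nonneg p₀)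
  have hxq : ∀ t, (1 - exp ((2 * β - 1) * (t - s))) * p₀ ^ 2 ≤ q₀ := fun t =>
    (mul_le_of_le_one_left (sq_nonneg p₀) (one_sub_exp_le_one _)).trans hpq
  refine ⟨fun t ht => ?_, fun hβ₀ t ht => ?_, fun hβ₀ t ht => ?_⟩
  · rw [hQ' t ht, mul_assoc, ← abs_two_mul_div_one_sub_two_mul hβ]
    exact mul_le_mul_of_nonneg_left (add_mul_le_one_add_abs_mul c (hx t ht) (hxq t))
      (exp_pos _).le
  · have hc : 0 ≤ c := div_nonneg (by linarith) (by linarith)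
    rw [hQ' t ht]
    exact mul_le_mul_of_nonneg_left (le_add_of_nonneg_right (mul_nonneg hc (hx t ht)))
      (exp_pos _).le
  · have hc : c ≤ 0 := div_nonpos_of_nonpos_of_nonneg (by linarith) (by linarith)
    rw [hQ' t ht, ← one_add_div_one_sub (by linarith : 2 * β ≠ 1), mul_comm _ (exp _),
      mul_assoc]
    exact mul_le_mul_of_nonneg_left (one_add_mul_le_add_mul hc (hxq t)) (exp_pos _).le

theorem dichotomy_bounds_beta_lt_half
    (α β s p₀ q₀ : ℝ) (hβ : β < 1 / 2) (hpq : p₀ ^ 2 ≤ q₀) (hq₀ : 0 ≤ q₀)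
    (Q : ℝ → ℝ)
    (hQ : ∀ t, s ≤ t → Q t = Real.exp ((2 * α + 1) * (t - s)) *
      (q₀ + (2 * β / (1 - 2 * β)) * (1 - Real.exp ((2 * β - 1) * (t - s))) * p₀ ^ 2)) :
    (∀ t, s ≤ t →
      Q t ≤ Real.exp ((2 * α + 1) * (t - s)) * (1 + 2 * |β| / (1 - 2 * β)) * q₀) ∧
    (0 ≤ β → ∀ t, s ≤ t → Q t ≥ Real.exp ((2 * α + 1) * (t - s)) * q₀) ∧
    (β < 0 → ∀ t, s ≤ t →
      Q t ≥ (1 / (1 - 2 * β)) * Real.exp ((2 * α + 1) * (t - s)) * q₀) :=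
  dichotomy_bounds_beta_lt_half_general α β s p₀ q₀ hβ hpq Q hQ
end

section
/- Let α ∈ ℝ, β = 1/2, and define for t ≥ s and p₀² ≤ q₀, q₀ ≥ 0: Q(t) = e^{(2α+1)(t−s)}·(q₀ + (t−s)·p₀²). Then Q(t) ≥ e^{(2α+1)(t−s)}·q₀, and for every ε > 0, Q(t) ≤ (1 + 1/ε)·e^{(2α+1+ε)(t−s)}·q₀. -/
theorem dichotomy_bounds_beta_eq_half
    (α s p₀ q₀ : ℝ) (hpq : p₀ ^ 2 ≤ q₀) (hq₀ : 0 ≤ q₀)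
    (Q : ℝ → ℝ)
    (hQ : ∀ t, s ≤ t →
      Q t = Real.exp ((2 * α + 1) * (t - s)) * (q₀ + (t - s) * p₀ ^ 2)) :
    (∀ t, s ≤ t → Q t ≥ Real.exp ((2 * α + 1) * (t - s)) * q₀) ∧
    (∀ ε > (0 : ℝ), ∀ t, s ≤ t →
      Q t ≤ (1 + 1 / ε) * Real.exp ((2 * α + 1 + ε) * (t - s)) * q₀) := by
  constructor
  · intro t ht
    rw [hQ t ht]
    have h1 : 0 ≤ (t - s) * p₀ ^ 2 := mul_nonneg (by linarith) (sq_nonneg _)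
    have h2 := Real.exp_pos ((2 * α + 1) * (t - s))
    nlinarith
  · intro ε hε t ht
    rw [hQ t ht]
    set u := t - s with hu
    have hu0 : 0 ≤ u := by linarith
    have hkey : u ≤ (1 / ε) * Real.exp (ε * u) := by
      have h1 : ε * u + 1 ≤ Real.exp (ε * u) := Real.add_one_le_exp _
      rw [div_mul_eq_mul_div, le_div_iff₀ hε]
      nlinarith [mul_nonneg hε.le hu0]
    have he1 : (1 : ℝ) ≤ Real.exp (ε * u) :=
      Real.one_le_exp (mul_nonneg hε.le hu0)
    have hstep : q₀ + u * p₀ ^ 2 ≤ (1 + 1 / ε) * Real.exp (ε * u) * q₀ := by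
      have h2 : u * p₀ ^ 2 ≤ u * q₀ := mul_le_mul_of_nonneg_left hpq hu0
      have h3 : u * q₀ ≤ (1 / ε) * Real.exp (ε * u) * q₀ :=
        mul_le_mul_of_nonneg_right hkey hq₀
      have h4 : q₀ ≤ Real.exp (ε * u) * q₀ := by nlinarith
      nlinarith
    calc Real.exp ((2 * α + 1) * u) * (q₀ + u * p₀ ^ 2)
        ≤ Real.exp ((2 * α + 1) * u) * ((1 + 1 / ε) * Real.exp (ε * u) * q₀) :=
          mul_le_mul_of_nonneg_left hstep (Real.exp_pos _).le
      _ = (1 + 1 / ε) * Real.exp ((2 * α + 1 + ε) * u) * q₀ := by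
          rw [show (2 * α + 1 + ε) * u = (2 * α + 1) * u + ε * u by ring,
            Real.exp_add]; ring
end

section
/- Let α ∈ ℝ, β > 1/2, and define for t ≥ s, p₀² ≤ q₀, q₀ ≥ 0: Q(t) = e^{(2α+1)(t−s)}·q₀ + (2β/(2β−1))·(e^{(2α+2β)(t−s)} − e^{(2α+1)(t−s)})·p₀². Then e^{(2α+1)(t−s)}·q₀ ≤ Q(t) ≤ (1 + 2β/(2β−1))·e^{(2α+2β)(t−s)}·q₀. -/
theorem dichotomy_bounds_beta_gt_half
    (α β s p₀ q₀ : ℝ) (hβ : 1 / 2 < β) (hpq : p₀ ^ 2 ≤ q₀) (hq₀ : 0 ≤ q₀)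
    (Q : ℝ → ℝ)
    (hQ : ∀ t, s ≤ t → Q t = Real.exp ((2 * α + 1) * (t - s)) * q₀ +
      (2 * β / (2 * β - 1)) *
        (Real.exp ((2 * α + 2 * β) * (t - s)) - Real.exp ((2 * α + 1) * (t - s))) * p₀ ^ 2) :
    ∀ t, s ≤ t →
      Real.exp ((2 * α + 1) * (t - s)) * q₀ ≤ Q t ∧
      Q t ≤ (1 + 2 * β / (2 * β - 1)) * Real.exp ((2 * α + 2 * β) * (t - s)) * q₀ := by
  intro t ht
  rw [hQ t ht]
  have hden : 0 < 2 * β - 1 := by linarith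
  have hc : 0 ≤ 2 * β / (2 * β - 1) := by positivity
  have hexp : Real.exp ((2 * α + 1) * (t - s)) ≤ Real.exp ((2 * α + 2 * β) * (t - s)) := by
    apply Real.exp_le_exp.mpr
    nlinarith [sub_nonneg.mpr ht]
  have hp2 : 0 ≤ p₀ ^ 2 := sq_nonneg _
  have he1 : 0 < Real.exp ((2 * α + 1) * (t - s)) := Real.exp_pos _
  have he2 : 0 < Real.exp ((2 * α + 2 * β) * (t - s)) := Real.exp_pos _
  have h1 : 0 ≤ 2 * β / (2 * β - 1) *
      (Real.exp ((2 * α + 2 * β) * (t - s)) - Real.exp ((2 * α + 1) * (t - s))) * p₀ ^ 2 :=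
    mul_nonneg (mul_nonneg hc (sub_nonneg.mpr hexp)) hp2
  constructor
  · linarith
  · have h2 : (Real.exp ((2 * α + 2 * β) * (t - s)) - Real.exp ((2 * α + 1) * (t - s))) * p₀ ^ 2
        ≤ Real.exp ((2 * α + 2 * β) * (t - s)) * q₀ :=
      mul_le_mul (by linarith) hpq hp2 he2.le
    have h3 := mul_le_mul_of_nonneg_left h2 hc
    have h4 := mul_le_mul_of_nonneg_right hexp hq₀
    nlinarith
end

section
/- Let Φ be a linear two-parameter family of bounded linear operators Φ_{t,s} : X_s → X_t between normed spaces indexed by s ≤ t, satisfying the evolution property Φ_{t,w} = Φ_{t,s} ∘ Φ_{s,w} for w ≤ s ≤ t. Suppose γ₁ < γ₂ are real numbers such that Φ admits an exponential dichotomy with growth rate γ₁ (decomposition X_t = U₁(t) ⊕ S₁(t), constants K₁, α₁) and with growth rate γ₂ (decomposition X_t = U₂(t) ⊕ S₂(t), constants K₂, α₂). Then S₁(t) ⊆ S₂(t) for all t. -/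
/-- `Φ` admits an exponential dichotomy with growth rate `γ`, constants `K`, `a`,
and invariant decomposition `X t = U t ⊕ S t`. -/
def ExpDichotomy {X : ℝ → Type*} [∀ t, NormedAddCommGroup (X t)]
    [∀ t, NormedSpace ℝ (X t)]
    (Φ : ∀ s t : ℝ, s ≤ t → (X s →L[ℝ] X t)) (γ : ℝ)
    (U S : ∀ t, Submodule ℝ (X t)) (K a : ℝ) : Prop :=
  0 < K ∧ 0 < a ∧
  (∀ t, IsCompl (U t) (S t)) ∧
  (∀ s t (h : s ≤ t), ∀ x ∈ S s, Φ s t h x ∈ S t) ∧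
  (∀ s t (h : s ≤ t), ∀ x ∈ U s, Φ s t h x ∈ U t) ∧
  (∀ s t (h : s ≤ t), ∀ x ∈ S s,
    ‖Φ s t h x‖ ≤ K * Real.exp ((γ - a) * (t - s)) * ‖x‖) ∧
  (∀ s t (h : s ≤ t), ∀ x ∈ U s,
    ‖Φ s t h x‖ ≥ K⁻¹ * Real.exp ((γ + a) * (t - s)) * ‖x‖)

/-!
A vector lies in the stable subspace of an exponential dichotomy with growth rate `γ` exactly
when its orbit grows at most like `e^{γ t}`: the unstable component of a vector with such an
orbit grows at rate at least `γ + a` while being bounded by a multiple of `e^{γ t}`, so it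
vanishes. Since a bound at rate `γ₁` is also a bound at any rate `γ₂ ≥ γ₁`, the stable
subspaces increase with the growth rate.
-/

open Filter Real

theorem nonpos_of_forall_le_const_mul_exp {c C δ : ℝ} (hδ : δ < 0)
    (h : ∀ τ, 0 ≤ τ → c ≤ C * exp (δ * τ)) : c ≤ 0 := by
  have hlim : Tendsto (fun τ => C * exp (δ * τ)) atTop (nhds 0) := by
    simpa using (tendsto_exp_atBot.comp (tendsto_id.const_mul_atTop_of_neg hδ)).const_mul C
  exact ge_of_tendsto hlim (eventually_atTop.2 ⟨0, h⟩)

section GrowthBound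

variable {X : ℝ → Type*} [∀ t, NormedAddCommGroup (X t)] [∀ t, NormedSpace ℝ (X t)]
  (Φ : ∀ s t : ℝ, s ≤ t → (X s →L[ℝ] X t))

def HasGrowthBound (s : ℝ) (x : X s) (β : ℝ) : Prop :=
  ∃ C, ∀ t (h : s ≤ t), ‖Φ s t h x‖ ≤ C * exp (β * (t - s))

variable {Φ}

theorem HasGrowthBound.mono {s β β' : ℝ} {x : X s} (hx : HasGrowthBound Φ s x β)
    (hβ : β ≤ β') : HasGrowthBound Φ s x β' := by
  obtain ⟨C, hC⟩ := hx
  refine ⟨max C 0, fun t h => (hC t h).trans ?_⟩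
  have hexp : exp (β * (t - s)) ≤ exp (β' * (t - s)) :=
    exp_le_exp.2 (mul_le_mul_of_nonneg_right hβ (sub_nonneg.2 h))
  calc C * exp (β * (t - s)) ≤ max C 0 * exp (β * (t - s)) := by
        gcongr; exact le_max_left _ _
    _ ≤ max C 0 * exp (β' * (t - s)) := by gcongr

theorem HasGrowthBound.sub {s β : ℝ} {x y : X s} (hx : HasGrowthBound Φ s x β)
    (hy : HasGrowthBound Φ s y β) : HasGrowthBound Φ s (x - y) β := by
  obtain ⟨C, hC⟩ := hx
  obtain ⟨D, hD⟩ := hy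
  refine ⟨C + D, fun t h => ?_⟩
  calc ‖Φ s t h (x - y)‖ = ‖Φ s t h x - Φ s t h y‖ := by rw [map_sub]
    _ ≤ ‖Φ s t h x‖ + ‖Φ s t h y‖ := norm_sub_le _ _
    _ ≤ (C + D) * exp (β * (t - s)) := by linarith [hC t h, hD t h]

end GrowthBound

namespace ExpDichotomy

variable {X : ℝ → Type*} [∀ t, NormedAddCommGroup (X t)] [∀ t, NormedSpace ℝ (X t)]
  {Φ : ∀ s t : ℝ, s ≤ t → (X s →L[ℝ] X t)} {γ K a : ℝ} {U S : ∀ t, Submodule ℝ (X t)}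

theorem hasGrowthBound_of_mem_stable (hd : ExpDichotomy Φ γ U S K a) {s : ℝ} {x : X s}
    (hx : x ∈ S s) : HasGrowthBound Φ s x γ := by
  obtain ⟨-, ha, -, -, -, hS, -⟩ := hd
  refine HasGrowthBound.mono ⟨K * ‖x‖, fun t h => ?_⟩ (by linarith : γ - a ≤ γ)
  linarith [hS s t h x hx]

theorem eq_zero_of_mem_unstable (hd : ExpDichotomy Φ γ U S K a) {s β : ℝ} {u : X s}
    (hu : u ∈ U s) (hβ : β < γ + a) (hgrowth : HasGrowthBound Φ s u β) : u = 0 := by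
  obtain ⟨hK, -, -, -, -, -, hU⟩ := hd
  obtain ⟨C, hC⟩ := hgrowth
  refine norm_le_zero_iff.1
    (nonpos_of_forall_le_const_mul_exp (C := K * C) (sub_neg.2 hβ) fun τ hτ => ?_)
  have hle : s ≤ s + τ := le_add_of_nonneg_right hτ
  have hsandwich := (hU s (s + τ) hle u hu).trans (hC (s + τ) hle)
  rw [add_sub_cancel_left] at hsandwich
  have hexp : exp ((β - (γ + a)) * τ) = exp (β * τ) / exp ((γ + a) * τ) := by
    rw [← exp_sub]; ring_nf
  rw [hexp, mul_div_assoc', le_div_iff₀ (exp_pos _)]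
  calc ‖u‖ * exp ((γ + a) * τ) = K * (K⁻¹ * exp ((γ + a) * τ) * ‖u‖) := by field_simp
    _ ≤ K * (C * exp (β * τ)) := by gcongr
    _ = K * C * exp (β * τ) := by ring

theorem mem_stable_iff (hd : ExpDichotomy Φ γ U S K a) {s : ℝ} {x : X s} :
    x ∈ S s ↔ HasGrowthBound Φ s x γ := by
  refine ⟨hd.hasGrowthBound_of_mem_stable, fun hx => ?_⟩
  have ⟨_, ha, hcompl, _⟩ := hd
  obtain ⟨u, y, hu, hy, rfl⟩ := Submodule.codisjoint_iff_exists_add_eq.1 (hcompl s).codisjoint x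
  have hu0 : u = 0 := hd.eq_zero_of_mem_unstable hu (lt_add_of_pos_right γ ha)
    (by simpa using hx.sub (hd.hasGrowthBound_of_mem_stable hy))
  simpa [hu0] using hy

end ExpDichotomy

theorem stable_subspaces_monotone_general
    {X : ℝ → Type*} [∀ t, NormedAddCommGroup (X t)] [∀ t, NormedSpace ℝ (X t)]
    (Φ : ∀ s t : ℝ, s ≤ t → (X s →L[ℝ] X t))
    (γ₁ γ₂ : ℝ) (hγ : γ₁ < γ₂)
    (U₁ S₁ U₂ S₂ : ∀ t, Submodule ℝ (X t)) (K₁ a₁ K₂ a₂ : ℝ)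
    (h₁ : ExpDichotomy Φ γ₁ U₁ S₁ K₁ a₁)
    (h₂ : ExpDichotomy Φ γ₂ U₂ S₂ K₂ a₂) :
    ∀ t, S₁ t ≤ S₂ t := fun _ _ hx =>
  h₂.mem_stable_iff.2 ((h₁.mem_stable_iff.1 hx).mono hγ.le)

theorem stable_subspaces_monotone
    {X : ℝ → Type*} [∀ t, NormedAddCommGroup (X t)] [∀ t, NormedSpace ℝ (X t)]
    (Φ : ∀ s t : ℝ, s ≤ t → (X s →L[ℝ] X t))
    (hid : ∀ s, Φ s s le_rfl = ContinuousLinearMap.id ℝ (X s))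
    (hcoc : ∀ w s t (h₁ : w ≤ s) (h₂ : s ≤ t) (x : X w),
      Φ w t (h₁.trans h₂) x = Φ s t h₂ (Φ w s h₁ x))
    (γ₁ γ₂ : ℝ) (hγ : γ₁ < γ₂)
    (U₁ S₁ U₂ S₂ : ∀ t, Submodule ℝ (X t)) (K₁ a₁ K₂ a₂ : ℝ)
    (h₁ : ExpDichotomy Φ γ₁ U₁ S₁ K₁ a₁)
    (h₂ : ExpDichotomy Φ γ₂ U₂ S₂ K₂ a₂) :
    ∀ t, S₁ t ≤ S₂ t :=
  stable_subspaces_monotone_general Φ γ₁ γ₂ hγ U₁ S₁ U₂ S₂ K₁ a₁ K₂ a₂ h₁ h₂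
end

section
/- Let Φ be a linear evolution family (as in the previous context) admitting exponential dichotomies with growth rate γ for two decompositions X_t = U(t) ⊕ S(t) and X_t = Û(t) ⊕ Ŝ(t). Then S(t) = Ŝ(t) for all t, i.e., the stable subspace of an exponential dichotomy with a given growth rate is unique. -/
open Filter Topology

lemma exp_decay_tendsto (c t : ℝ) (hc : 0 < c) :
    Tendsto (fun r => Real.exp (-c * (r - t))) atTop (nhds 0) := by
  apply Real.tendsto_exp_atBot.comp
  have h1 : Tendsto (fun r : ℝ => r - t) atTop atTop :=
    tendsto_atTop_add_const_right _ _ tendsto_id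
  have h2 : Tendsto (fun r : ℝ => c * (r - t)) atTop atTop := h1.const_mul_atTop hc
  have h3 := tendsto_neg_atTop_atBot.comp h2
  exact h3.congr fun r => (neg_mul c (r - t)).symm

lemma stable_le
    {X : ℝ → Type*} [∀ t, NormedAddCommGroup (X t)] [∀ t, NormedSpace ℝ (X t)]
    (Φ : ∀ s t : ℝ, s ≤ t → (X s →L[ℝ] X t))
    (γ : ℝ) (U S U' S' : ∀ t, Submodule ℝ (X t)) (K a K' a' : ℝ)
    (h₁ : ExpDichotomy Φ γ U S K a)
    (h₂ : ExpDichotomy Φ γ U' S' K' a') :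
    ∀ t, S t ≤ S' t := by
  obtain ⟨hK, ha, hcompl, hSinv, hUinv, hSbd, hUbd⟩ := h₁
  obtain ⟨hK', ha', hcompl', hSinv', hUinv', hSbd', hUbd'⟩ := h₂
  intro t x hx
  have hx_top : x ∈ U' t ⊔ S' t := by
    rw [(hcompl' t).sup_eq_top]; trivial
  obtain ⟨u, hu, s, hs, hus⟩ := Submodule.mem_sup.mp hx_top
  have key : ∀ r, t ≤ r → ‖u‖ ≤ K' * K * Real.exp (-(a + a') * (r - t)) * ‖x‖
      + K' * K' * Real.exp (-(2 * a') * (r - t)) * ‖s‖ := by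
    intro r hr
    have hΦu : Φ t r hr u = Φ t r hr x - Φ t r hr s := by
      rw [← hus, map_add]; abel
    have h1 : K'⁻¹ * Real.exp ((γ + a') * (r - t)) * ‖u‖ ≤ ‖Φ t r hr u‖ :=
      hUbd' t r hr u hu
    have h2 : ‖Φ t r hr x‖ ≤ K * Real.exp ((γ - a) * (r - t)) * ‖x‖ :=
      hSbd t r hr x hx
    have h3 : ‖Φ t r hr s‖ ≤ K' * Real.exp ((γ - a') * (r - t)) * ‖s‖ :=
      hSbd' t r hr s hs
    have h4 : ‖Φ t r hr u‖ ≤ ‖Φ t r hr x‖ + ‖Φ t r hr s‖ := by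
      rw [hΦu]; exact norm_sub_le _ _
    have chain : K'⁻¹ * Real.exp ((γ + a') * (r - t)) * ‖u‖
        ≤ K * Real.exp ((γ - a) * (r - t)) * ‖x‖
          + K' * Real.exp ((γ - a') * (r - t)) * ‖s‖ := by linarith
    have hE : (0:ℝ) < Real.exp ((γ + a') * (r - t)) := Real.exp_pos _
    have hA : Real.exp ((γ - a) * (r - t)) * (Real.exp ((γ + a') * (r - t)))⁻¹
        = Real.exp (-(a + a') * (r - t)) := by
      rw [← Real.exp_neg, ← Real.exp_add]
      congr 1; ring
    have hB : Real.exp ((γ - a') * (r - t)) * (Real.exp ((γ + a') * (r - t)))⁻¹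
        = Real.exp (-(2 * a') * (r - t)) := by
      rw [← Real.exp_neg, ← Real.exp_add]
      congr 1; ring
    calc ‖u‖ = K' * (Real.exp ((γ + a') * (r - t)))⁻¹
          * (K'⁻¹ * Real.exp ((γ + a') * (r - t)) * ‖u‖) := by
          field_simp
      _ ≤ K' * (Real.exp ((γ + a') * (r - t)))⁻¹
          * (K * Real.exp ((γ - a) * (r - t)) * ‖x‖
            + K' * Real.exp ((γ - a') * (r - t)) * ‖s‖) := by
          apply mul_le_mul_of_nonneg_left chain
          positivity
      _ = K' * K * (Real.exp ((γ - a) * (r - t)) * (Real.exp ((γ + a') * (r - t)))⁻¹) * ‖x‖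
          + K' * K' * (Real.exp ((γ - a') * (r - t)) * (Real.exp ((γ + a') * (r - t)))⁻¹) * ‖s‖ := by
          ring
      _ = _ := by rw [hA, hB]
  have hlim : Tendsto (fun r => K' * K * Real.exp (-(a + a') * (r - t)) * ‖x‖
      + K' * K' * Real.exp (-(2 * a') * (r - t)) * ‖s‖) atTop (nhds 0) := by
    have t1 := exp_decay_tendsto (a + a') t (by linarith)
    have t2 := exp_decay_tendsto (2 * a') t (by linarith)
    have := ((t1.const_mul (K' * K)).mul_const ‖x‖).add
      ((t2.const_mul (K' * K')).mul_const ‖s‖)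
    simpa using this
  have hle : ‖u‖ ≤ 0 :=
    ge_of_tendsto hlim (eventually_atTop.mpr ⟨t, key⟩)
  have hu0 : u = 0 := norm_eq_zero.mp (le_antisymm hle (norm_nonneg _))
  have : x = s := by rw [← hus, hu0, zero_add]
  rw [this]; exact hs

theorem stable_subspace_unique
    {X : ℝ → Type*} [∀ t, NormedAddCommGroup (X t)] [∀ t, NormedSpace ℝ (X t)]
    (Φ : ∀ s t : ℝ, s ≤ t → (X s →L[ℝ] X t))
    (hid : ∀ s, Φ s s le_rfl = ContinuousLinearMap.id ℝ (X s))
    (hcoc : ∀ w s t (h₁ : w ≤ s) (h₂ : s ≤ t) (x : X w),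
      Φ w t (h₁.trans h₂) x = Φ s t h₂ (Φ w s h₁ x))
    (γ : ℝ) (U S U' S' : ∀ t, Submodule ℝ (X t)) (K a K' a' : ℝ)
    (h₁ : ExpDichotomy Φ γ U S K a)
    (h₂ : ExpDichotomy Φ γ U' S' K' a') :
    ∀ t, S t = S' t := by
  intro t
  exact le_antisymm (stable_le Φ γ U S U' S' K a K' a' h₁ h₂ t)
    (stable_le Φ γ U' S' U S K' a' K a h₂ h₁ t)
end
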